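/- For every n ≥ 1 there is a set A ⊆ 𝔽₃ⁿ such that for every subspace V ≤ 𝔽₃ⁿ of positive dimension, sup_{r ∉ V^⊥} |(1_A μ_V)^∧(r)| ≥ √3/6. Explicitly, one may take A = {x ∈ 𝔽₃ⁿ : ∃ i with x₁ = ⋯ = x_i = 0 and x_{i+1} = 1} (where i ranges over 0 ≤ i ≤ n−1). -/

import Mathlib

open scoped Classical
open Finset
noncomputable section

/-- Dot product on `𝔽₃ⁿ`. -/
def dot3 {n : ℕ} (r x : Fin n → ZMod 3) : ZMod 3 := ∑ i, r i * x i

/-- The additive character `t ↦ e^{-2πit/3}` of `𝔽₃`. -/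
def chi3 (t : ZMod 3) : ℂ :=
  Complex.exp (-(2 * Real.pi * Complex.I) * (t.val : ℂ) / 3)

/-- `(1_A μ_V)^∧(r) = |V|⁻¹ ∑_{v ∈ V} 1_A(v) e^{-2πi (r·v)/3}`. -/
def fsub3 {n : ℕ} (A : Set (Fin n → ZMod 3))
    (V : Submodule (ZMod 3) (Fin n → ZMod 3)) (r : Fin n → ZMod 3) : ℂ :=
  (∑ v : V, if (v : Fin n → ZMod 3) ∈ A then
      chi3 (dot3 r (v : Fin n → ZMod 3)) else 0) / (Fintype.card V)

/-!
Let `i` be the first coordinate on which `V` is not identically zero, and take `r = eᵢ`,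
so `r ∉ V^⊥`. Every `u ∈ V` vanishes before `i`, hence for `u ∈ V` with `uᵢ ≠ 0` we have
`u ∈ A ↔ uᵢ = 1`. The slices `uᵢ = 0, 1, 2` of `V` each have `|V|/3` elements. In the
imaginary part of `(1_A μ_V)^∧(eᵢ)` the slice `uᵢ = 0` contributes nothing (`χ(0) = 1`), the
slice `uᵢ = 2` misses `A`, and each point of the slice `uᵢ = 1` contributes `Im χ(1) = -√3/2`,
giving `|Im (1_A μ_V)^∧(eᵢ)| = √3/6`.
-/

theorem Submodule.card_eq_card_mul_card_coord_fiber {K ι : Type*} [Field K] [Fintype K]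
    [DecidableEq K] (V : Submodule K (ι → K)) [Fintype V] {i : ι} {v₀ : ι → K}
    (hv₀ : v₀ ∈ V) (hv₀i : v₀ i ≠ 0) (c : K) :
    Fintype.card V = Fintype.card K * #{u : V | (u : ι → K) i = c} := by
  set f := (LinearMap.proj i).comp V.subtype
  have hsurj : ∀ d : K, d ∈ Set.range f := fun d =>
    ⟨⟨(d / v₀ i) • v₀, V.smul_mem _ hv₀⟩, by simp [f, div_mul_cancel₀ _ hv₀i]⟩
  rw [← Finset.card_univ, Finset.card_eq_sum_card_fiberwise (f := f) (t := univ)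
    (fun _ _ => mem_univ _), Finset.sum_const_nat fun d _ =>
      AddMonoidHom.card_fiber_eq_of_mem_range f (hsurj d) (hsurj c)]
  simp only [f, LinearMap.coe_comp, Function.comp_apply, LinearMap.proj_apply,
    Submodule.coe_subtype, card_univ]
  congr

theorem Submodule.exists_leading_coord {K ι : Type*} [Field K] [LinearOrder ι]
    [WellFoundedLT ι] {V : Submodule K (ι → K)} (hV : V ≠ ⊥) :
    ∃ i, (∃ v ∈ V, v i = 1) ∧ ∀ u ∈ V, ∀ k < i, u k = 0 := by
  obtain ⟨v, hv, hv0⟩ := V.exists_mem_ne_zero_of_ne_bot hV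
  obtain ⟨k, hk⟩ := Function.ne_iff.mp hv0
  obtain ⟨i, ⟨w, hw, hwi⟩, hmin⟩ :=
    wellFounded_lt.has_min {k | ∃ w ∈ V, w k ≠ 0} ⟨k, v, hv, hk⟩
  exact ⟨i, ⟨(w i)⁻¹ • w, V.smul_mem _ hw, by simp [hwi]⟩,
    fun u hu k hk => by_contra fun h => hmin k ⟨u, hu, h⟩ hk⟩

theorem exists_prefix_zero_and_eq_one_iff {ι R : Type*} [LinearOrder ι] [Zero R] [One R]
    [NeZero (1 : R)] {x : ι → R} {i : ι} (hx : ∀ k < i, x k = 0) (hxi : x i ≠ 0) :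
    (∃ j, (∀ k < j, x k = 0) ∧ x j = 1) ↔ x i = 1 := by
  refine ⟨fun ⟨j, hj0, hj1⟩ => ?_, fun h => ⟨i, hx, h⟩⟩
  rcases lt_trichotomy j i with h | rfl | h
  · exact absurd (hx j h ▸ hj1) zero_ne_one
  · exact hj1
  · exact absurd (hj0 i h) hxi

theorem dot3_single_one_left {n : ℕ} (i : Fin n) (x : Fin n → ZMod 3) :
    dot3 (Pi.single i 1) x = x i := by
  simp [dot3, Pi.single_apply, ite_mul]

theorem chi3_zero : chi3 0 = 1 := by
  simp [chi3]

theorem im_chi3_one : (chi3 1).im = -(√3 / 2) := by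
  have h : -(2 * Real.pi * Complex.I) * ((1 : ZMod 3).val : ℂ) / 3
      = ((-(Real.pi - Real.pi / 3) : ℝ) : ℂ) * Complex.I := by
    rw [show (1 : ZMod 3).val = 1 from rfl]; push_cast; ring
  rw [chi3, h, Complex.exp_ofReal_mul_I_im, Real.sin_neg, Real.sin_pi_sub,
    Real.sin_pi_div_three]

section

variable {n : ℕ} (A : Set (Fin n → ZMod 3)) (V : Submodule (ZMod 3) (Fin n → ZMod 3))
  {i : Fin n}

theorem im_sum_chi3_coord (hA : ∀ u ∈ V, u i ≠ 0 → (u ∈ A ↔ u i = 1)) :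
    (∑ v : V, if (v : Fin n → ZMod 3) ∈ A then chi3 ((v : Fin n → ZMod 3) i) else 0).im
      = -(√3 / 2) * #{u : V | (u : Fin n → ZMod 3) i = 1} := by
  have hterm : ∀ u : V, (if (u : Fin n → ZMod 3) ∈ A then chi3 ((u : Fin n → ZMod 3) i)
      else 0).im = if (u : Fin n → ZMod 3) i = 1 then -(√3 / 2) else 0 := by
    intro ⟨u, hu⟩
    have hcases : ∀ t : ZMod 3, t = 0 ∨ t = 1 ∨ t = 2 := by decide
    rcases hcases (u i) with h | h | h
    · split_ifs <;> simp_all [chi3_zero]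
    · simp [h, (hA u hu (by simp [h])).mpr h, im_chi3_one]
    · have h0 : u i ≠ 0 := by rw [h]; decide
      have h1 : u i ≠ 1 := by rw [h]; decide
      simp [h1, mt (hA u hu h0).mp h1]
  rw [Complex.im_sum, Finset.sum_congr rfl fun u _ => hterm u, ← Finset.sum_filter,
    Finset.sum_const, nsmul_eq_mul, mul_comm]

theorem sqrt_three_div_six_le_norm_fsub3 {v₀ : Fin n → ZMod 3} (hv₀ : v₀ ∈ V)
    (hv₀i : v₀ i ≠ 0) (hA : ∀ u ∈ V, u i ≠ 0 → (u ∈ A ↔ u i = 1)) :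
    √3 / 6 ≤ ‖fsub3 A V (Pi.single i 1)‖ := by
  set S := ∑ v : V, if (v : Fin n → ZMod 3) ∈ A then chi3 ((v : Fin n → ZMod 3) i) else 0
  set c := #{u : V | (u : Fin n → ZMod 3) i = 1}
  have hV : Fintype.card V = 3 * c := by
    rw [V.card_eq_card_mul_card_coord_fiber hv₀ hv₀i 1, ZMod.card]
  have hc : (0 : ℝ) < c := by
    have := Fintype.card_pos (α := V)
    rw [hV] at this
    exact_mod_cast Nat.pos_of_mul_pos_left this
  calc √3 / 6 = (√3 / 2 * c) / (3 * c) := by field_simp; ring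
    _ = |S.im| / Fintype.card V := by
      rw [im_sum_chi3_coord A V hA, hV, abs_mul, abs_neg, abs_of_pos (by positivity),
        Nat.abs_cast]
      push_cast; rfl
    _ ≤ ‖S‖ / Fintype.card V := by gcongr; exact Complex.abs_im_le_norm S
    _ = ‖fsub3 A V (Pi.single i 1)‖ := by
      simp only [fsub3, dot3_single_one_left, norm_div, Complex.norm_natCast, S]

end

theorem no_uniform_subspace_F3_general (n : ℕ) :
    ∃ A : Set (Fin n → ZMod 3),
      A = {x : Fin n → ZMod 3 | ∃ i : Fin n, (∀ k < i, x k = 0) ∧ x i = 1} ∧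
      ∀ V : Submodule (ZMod 3) (Fin n → ZMod 3), 0 < Module.finrank (ZMod 3) V →
        ∃ r : Fin n → ZMod 3, (∃ v ∈ V, dot3 r v ≠ 0) ∧
          Real.sqrt 3 / 6 ≤ ‖fsub3 A V r‖ := by
  refine ⟨_, rfl, fun V hV => ?_⟩
  have hV : V ≠ ⊥ := fun h => hV.ne' (by rw [h, finrank_bot])
  obtain ⟨i, ⟨v₀, hv₀, hv₀i⟩, hlead⟩ := V.exists_leading_coord hV
  have hv₀i' : v₀ i ≠ 0 := hv₀i ▸ one_ne_zero
  exact ⟨Pi.single i 1, ⟨v₀, hv₀, by rwa [dot3_single_one_left]⟩,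
    sqrt_three_div_six_le_norm_fsub3 _ V hv₀ hv₀i' fun u hu hui =>
      exists_prefix_zero_and_eq_one_iff (hlead u hu) hui⟩

/-- over `𝔽₃` there is a set which is not `√3/6`-uniform on any
subspace of positive dimension; one may take
`A = {x : ∃ i, x₁ = ⋯ = x_i = 0, x_{i+1} = 1}`. -/
theorem no_uniform_subspace_F3 (n : ℕ) (hn : 1 ≤ n) :
    ∃ A : Set (Fin n → ZMod 3),
      A = {x : Fin n → ZMod 3 | ∃ i : Fin n, (∀ k < i, x k = 0) ∧ x i = 1} ∧
      ∀ V : Submodule (ZMod 3) (Fin n → ZMod 3), 0 < Module.finrank (ZMod 3) V →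
        ∃ r : Fin n → ZMod 3, (∃ v ∈ V, dot3 r v ≠ 0) ∧
          Real.sqrt 3 / 6 ≤ ‖fsub3 A V r‖ :=
  no_uniform_subspace_F3_general n
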